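/- arXiv:2507.00643 — 4 statements merged into one kernel-verified Lean document; each statement's English description precedes it below -/
import Mathlib

section
/- For the CDPIC(S,K) problem with M messages and C = M clients, if (n−1)·⌊M/(S+n−1)⌋ < K ≤ n·⌊M/(S+n)⌋ for some n ∈ {2,...,M−S}, then transmitting the S+n uncoded messages X_{1+j⌊M/(S+n)⌋} for j = 0,...,S+n−1 guarantees that every client's window of K consecutive messages contains at most n of the transmitted messages, so every client receives at least S new messages. -/
/-!
The transmitted messages form an arithmetic progression of step `d = ⌊M/(S+n)⌋` whose
`S+n` terms fit into `Z/MZ` without wrapping around. Two distinct terms therefore lie at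
circular distance at least `d` from each other in both directions, so they fall into distinct
blocks `[kd, (k+1)d)` after translating by the client index. A window of length
`K ≤ nd` meets at most `n` blocks, hence contains at most `n` transmitted messages.
-/

/-- Client `i` possesses message `x` iff `x` lies in the circular window
`{i, i+1, ..., i+K-1}` of `Z/MZ`. -/
def window (M K : ℕ) (i x : ZMod M) : Prop := (x - i).val < K

namespace ZMod

variable {M : ℕ} [NeZero M]

theorem val_div_ne_of_eq_add {d c : ℕ} (hd : 0 < d) (hdc : d ≤ c) (hcM : c + d ≤ M)
    {x y : ZMod M} (hxy : y = x + c) : x.val / d ≠ y.val / d := by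
  have hval : y.val = (x.val + c) % M := by
    rw [hxy, ZMod.val_add, ZMod.val_natCast, Nat.mod_eq_of_lt (show c < M by omega)]
  have hxM : x.val < M := ZMod.val_lt x
  by_cases hwrap : x.val + c < M
  · have hy : y.val = x.val + c := by rw [hval, Nat.mod_eq_of_lt hwrap]
    have h := Nat.div_le_div_right (c := d) (show x.val + d ≤ y.val by omega)
    rw [Nat.add_div_right _ hd] at h
    omega
  · have hy : y.val = x.val + c - M := by
      rw [hval, Nat.mod_eq_sub_mod (by omega), Nat.mod_eq_of_lt (by omega)]
    have h := Nat.div_le_div_right (c := d) (show y.val + d ≤ x.val by omega)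
    rw [Nat.add_div_right _ hd] at h
    omega

theorem injective_val_div_progression {m d : ℕ} (hd : 0 < d) (hmd : m * d ≤ M) (b : ZMod M) :
    Function.Injective fun j : Fin m => (b + (j : ℕ) * d : ZMod M).val / d := by
  intro j₁ j₂ heq
  by_contra hne
  wlog hlt : j₁ < j₂ generalizing j₁ j₂
  · exact this heq.symm (Ne.symm hne) (lt_of_le_of_ne (not_lt.mp hlt) (Ne.symm hne))
  have hle : (j₁ : ℕ) ≤ j₂ := hlt.le
  refine val_div_ne_of_eq_add (c := ((j₂ : ℕ) - j₁) * d) hd ?_ ?_ ?_ heq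
  · exact Nat.le_mul_of_pos_left d (Nat.sub_pos_of_lt hlt)
  · calc ((j₂ : ℕ) - j₁) * d + d = ((j₂ : ℕ) - j₁ + 1) * d := by ring
      _ ≤ m * d := Nat.mul_le_mul_right d (by omega)
      _ ≤ M := hmd
  · push_cast [Nat.cast_sub hle]
    ring

open scoped Classical in
theorem card_filter_window_progression_le {m d : ℕ} (hmd : m * d ≤ M) (n : ℕ) (a i : ZMod M) :
    (Finset.univ.filter fun j : Fin m => window M (n * d) i (a + (j : ℕ) * d)).card ≤ n := by
  rcases Nat.eq_zero_or_pos d with rfl | hd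
  · simp [window]
  calc _ ≤ (Finset.range n).card :=
        Finset.card_le_card_of_injOn (fun j : Fin m => (a - i + (j : ℕ) * d : ZMod M).val / d)
          ?_ (injective_val_div_progression hd hmd (a - i)).injOn
    _ = n := Finset.card_range n
  intro j hj
  rw [Finset.mem_coe, Finset.mem_filter, window, add_sub_right_comm, mul_comm n] at hj
  exact Finset.mem_coe.mpr (Finset.mem_range.mpr (Nat.div_lt_of_lt_mul hj.2))

end ZMod

open scoped Classical in
theorem uncoded_scheme_medium_K_general (M S K n : ℕ) [NeZero M]
    (hhigh : K ≤ n * (M / (S + n))) :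
    ∀ i : ZMod M,
      (Finset.univ.filter (fun j : Fin (S + n) =>
        window M K i ((1 + (j : ℕ) * (M / (S + n)) : ℕ) : ZMod M))).card ≤ n ∧
      S ≤ (Finset.univ.filter (fun j : Fin (S + n) =>
        ¬ window M K i ((1 + (j : ℕ) * (M / (S + n)) : ℕ) : ZMod M))).card := by
  intro i
  set d := M / (S + n)
  have hfit : (S + n) * d ≤ M := Nat.mul_div_le M (S + n)
  have hcard : (Finset.univ.filter (fun j : Fin (S + n) =>
      window M K i ((1 + (j : ℕ) * d : ℕ) : ZMod M))).card ≤ n := by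
    refine le_trans (Finset.card_le_card ?_) (ZMod.card_filter_window_progression_le hfit n 1 i)
    refine Finset.monotone_filter_right _ fun j _ hj => ?_
    push_cast at hj
    exact lt_of_lt_of_le hj hhigh
  refine ⟨hcard, ?_⟩
  have hsplit := Finset.card_filter_add_card_filter_not (s := Finset.univ)
    fun j : Fin (S + n) => window M K i ((1 + (j : ℕ) * d : ℕ) : ZMod M)
  rw [Finset.card_univ, Fintype.card_fin] at hsplit
  omega

open scoped Classical in
/-- CDPIC(S,K) with `C = M` clients: if
`(n-1)⌊M/(S+n-1)⌋ < K ≤ n⌊M/(S+n)⌋` for some `n ∈ {2,…,M-S}`, then among the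
`S+n` transmitted messages `X_{1 + j⌊M/(S+n)⌋}` (`j = 0,…,S+n-1`) every
client's window of `K` consecutive messages contains at most `n`, so every
client receives at least `S` new messages. -/
theorem uncoded_scheme_medium_K (M S K n : ℕ) [NeZero M]
    (hS : 1 ≤ S) (hn2 : 2 ≤ n) (hnM : n ≤ M - S) (hSn : S + n ≤ M)
    (hlow : (n - 1) * (M / (S + n - 1)) < K) (hhigh : K ≤ n * (M / (S + n))) :
    ∀ i : ZMod M,
      (Finset.univ.filter (fun j : Fin (S + n) =>
        window M K i ((1 + (j : ℕ) * (M / (S + n)) : ℕ) : ZMod M))).card ≤ n ∧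
      S ≤ (Finset.univ.filter (fun j : Fin (S + n) =>
        ¬ window M K i ((1 + (j : ℕ) * (M / (S + n)) : ℕ) : ZMod M))).card :=
  uncoded_scheme_medium_K_general M S K n hhigh
end

section
/- For the CDPIC(1,K) problem with M messages and C = M clients, if ⌊(M+2)/3⌋ < K < ⌊M/2⌋, the two coded transmissions X_1 ⊕ X_K (from client C_0) and X_{M−2K+2} ⊕ X_{M−K+1} (from client C_{M−2K+1}) satisfy every client with one new message: each of the M clients possesses exactly one of the two messages in at least one of the two transmitted pairs while lacking the other. -/
theorem ZMod.val_sub_eq_ite {n : ℕ} [NeZero n] (a b : ZMod n) :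
    (a - b).val = if b.val ≤ a.val then a.val - b.val else a.val + n - b.val := by
  split_ifs with h
  · exact ZMod.val_sub h
  · have hwrap : n ≤ (a - b).val + b.val := by
      by_contra hlt
      have := ZMod.val_add_of_lt (not_le.mp hlt)
      rw [sub_add_cancel] at this
      omega
    have := ZMod.val_add_of_le hwrap
    rw [sub_add_cancel] at this
    omega

theorem xor_window_pair_iff {M K : ℕ} [NeZero M] (hKM : 2 * K ≤ M) (i a : ZMod M) :
    Xor (window M K i a) (window M K i (a + (K - 1 : ℕ))) ↔
      0 < (i - a).val ∧ (i - a).val < K ∨ M - K < (i - a).val := by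
  have hfirst : a - i = -(i - a) := (neg_sub i a).symm
  have hlast : a + ((K - 1 : ℕ) : ZMod M) - i = ((K - 1 : ℕ) : ZMod M) - (i - a) := by ring
  have hd := (i - a).val_lt
  unfold window
  rw [hfirst, hlast, ZMod.neg_val, ZMod.val_sub_eq_ite ((K - 1 : ℕ) : ZMod M),
    ZMod.val_natCast_of_lt (by omega)]
  simp only [← ZMod.val_eq_zero]
  split_ifs <;> simp only [Xor] <;> omega

/-- CDPIC(1,K) with `M` messages, `C = M` clients and
`⌊(M+2)/3⌋ < K < ⌊M/2⌋`: the two coded transmissions `X_1 ⊕ X_K` and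
`X_{M-2K+2} ⊕ X_{M-K+1}` satisfy every client with one new message: every
client possesses exactly one message of at least one of the two transmitted
pairs. -/
theorem two_coded_transmissions_suffice (M K : ℕ) [NeZero M]
    (h1 : (M + 2) / 3 < K) (h2 : K < M / 2) :
    ∀ i : ZMod M,
      Xor' (window M K i ((1 : ℕ) : ZMod M)) (window M K i ((K : ℕ) : ZMod M)) ∨
      Xor' (window M K i ((M - 2 * K + 2 : ℕ) : ZMod M))
           (window M K i ((M - K + 1 : ℕ) : ZMod M)) := by
  intro i
  change Xor _ _ ∨ Xor _ _
  have hM := NeZero.pos M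
  have hKM : 2 * K ≤ M := by omega
  have hfirst : ((K : ℕ) : ZMod M) = ((1 : ℕ) : ZMod M) + ((K - 1 : ℕ) : ZMod M) := by
    rw [← Nat.cast_add]; congr 1; omega
  have hsecond : ((M - K + 1 : ℕ) : ZMod M) =
      ((M - 2 * K + 2 : ℕ) : ZMod M) + ((K - 1 : ℕ) : ZMod M) := by
    rw [← Nat.cast_add]; congr 1; omega
  rw [hfirst, hsecond, xor_window_pair_iff hKM, xor_window_pair_iff hKM,
    ZMod.val_sub_eq_ite, ZMod.val_sub_eq_ite, ZMod.val_natCast_of_lt (by omega),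
    ZMod.val_natCast_of_lt (by omega)]
  have hi := i.val_lt
  split_ifs <;> omega
end

section
/- For integers M ≥ 1 and n ≥ 1 with S ≥ 1 and S+n ≤ M, any set of K ≤ n·⌊M/(S+n)⌋ consecutive residues mod M contains at most n elements of the arithmetic progression {1 + j·⌊M/(S+n)⌋ mod M : j = 0,...,S+n−1}. -/
/-!
Shifting the progression by `-a` and reading residues in `[0, M)`, two terms `j₁ < j₂` differ
by `(j₂ - j₁) q` mod `M`, and `q ≤ (j₂ - j₁) q ≤ M - q` because `(S + n) q ≤ M`. Hence their
representatives are at least `q` apart, so those in `[0, n q)` fall into distinct blocks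
`[k q, (k + 1) q)`, of which there are `n`.
-/

theorem Nat.lt_add_of_div_eq_div {a b q : ℕ} (hq : 0 < q) (h : a / q = b / q) : a < b + q := by
  have ha := Nat.div_add_mod a q
  have hb := Nat.div_add_mod b q
  have := Nat.mod_lt a hq
  rw [h] at ha
  omega

theorem Finset.card_le_of_lt_mul_of_separated {ι : Type*} (s : Finset ι) (f : ι → ℕ)
    {n q : ℕ} (hlt : ∀ i ∈ s, f i < n * q)
    (hsep : ∀ i ∈ s, ∀ j ∈ s, i ≠ j → f i + q ≤ f j ∨ f j + q ≤ f i) :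
    s.card ≤ n := by
  simpa using Finset.card_le_card_of_injOn (fun i => f i / q) (t := Finset.range n)
    (fun i hi => Finset.mem_range.2 (Nat.div_lt_of_lt_mul (mul_comm n q ▸ hlt i hi)))
    (fun i hi j hj (hdiv : f i / q = f j / q) => by
      by_contra hne
      have hq : 0 < q := Nat.pos_of_mul_pos_left ((Nat.zero_le _).trans_lt (hlt i hi))
      have hij := Nat.lt_add_of_div_eq_div hq hdiv
      have hji := Nat.lt_add_of_div_eq_div hq hdiv.symm
      rcases hsep i hi j hj hne with h | h <;> omega)

theorem ZMod.val_separated_of_val_sub {M q : ℕ} [NeZero M] {x y : ZMod M}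
    (hq : q ≤ (y - x).val) (hqM : (y - x).val + q ≤ M) :
    x.val + q ≤ y.val ∨ y.val + q ≤ x.val := by
  have hy : y = x + (y - x) := by abel
  rcases lt_or_ge (x.val + (y - x).val) M with h | h
  · left
    rw [hy, ZMod.val_add_of_lt h]
    omega
  · right
    have := ZMod.val_lt x
    rw [hy, ZMod.val_add_of_le h]
    omega

theorem ZMod.val_progression_separated {M m q : ℕ} [NeZero M] (hmq : m * q ≤ M) (c : ℕ)
    (a : ZMod M) {i j : ℕ} (hi : i < m) (hj : j < m) (hij : i ≠ j) :
    (((c + i * q : ℕ) : ZMod M) - a).val + q ≤ (((c + j * q : ℕ) : ZMod M) - a).val ∨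
      (((c + j * q : ℕ) : ZMod M) - a).val + q ≤ (((c + i * q : ℕ) : ZMod M) - a).val := by
  wlog hlt : i < j generalizing i j
  · exact (this hj hi hij.symm (by omega)).symm
  rcases Nat.eq_zero_or_pos q with rfl | hq
  · simp only [add_zero]
    exact le_total _ _
  have hstep : (j - i + 1) * q ≤ M := (Nat.mul_le_mul_right q (by omega)).trans hmq
  have hdiff : (((c + j * q : ℕ) : ZMod M) - a) - (((c + i * q : ℕ) : ZMod M) - a) =
      (((j - i) * q : ℕ) : ZMod M) := by
    push_cast [Nat.cast_sub hlt.le]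
    ring
  have hval : ((((j - i) * q : ℕ) : ZMod M)).val = (j - i) * q :=
    ZMod.val_cast_of_lt (by linarith [add_one_mul (j - i) q])
  apply ZMod.val_separated_of_val_sub <;> rw [hdiff, hval]
  · exact Nat.le_mul_of_pos_left q (by omega)
  · linarith [add_one_mul (j - i) q]

open scoped Classical in
theorem interval_meets_progression_general (M S n K : ℕ) [NeZero M]
    (hK : K ≤ n * (M / (S + n))) :
    ∀ a : ZMod M,
      (Finset.univ.filter (fun j : Fin (S + n) =>
        ((((1 + (j : ℕ) * (M / (S + n)) : ℕ) : ZMod M) - a).val < K))).card ≤ n := by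
  intro a
  have hmq : (S + n) * (M / (S + n)) ≤ M := Nat.mul_div_le M (S + n)
  refine Finset.card_le_of_lt_mul_of_separated (q := M / (S + n)) _
    (fun j : Fin (S + n) => (((1 + (j : ℕ) * (M / (S + n)) : ℕ) : ZMod M) - a).val)
    (fun j hj => ?_) (fun i _ j _ hij => ?_)
  · exact (Finset.mem_filter.1 hj).2.trans_le hK
  · exact ZMod.val_progression_separated hmq 1 a i.isLt j.isLt (Fin.val_ne_of_ne hij)

open scoped Classical in
/-- For `M ≥ 1`, `n ≥ 1`, `S ≥ 1` with `S + n ≤ M` and `q = ⌊M/(S+n)⌋`: any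
circular interval `{a, a+1, …, a+K-1}` of length `K ≤ n·q` in `Z/MZ` contains
at most `n` elements of the arithmetic progression
`{1 + j·q mod M : 0 ≤ j ≤ S+n-1}`. -/
theorem interval_meets_progression (M S n K : ℕ) [NeZero M]
    (hM : 1 ≤ M) (hn : 1 ≤ n) (hS : 1 ≤ S) (hSn : S + n ≤ M)
    (hK : K ≤ n * (M / (S + n))) :
    ∀ a : ZMod M,
      (Finset.univ.filter (fun j : Fin (S + n) =>
        ((((1 + (j : ℕ) * (M / (S + n)) : ℕ) : ZMod M) - a).val < K))).card ≤ n :=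
  interval_meets_progression_general M S n K hK
end

section
/- For positive integers M, S, K with M = C, combining the uncoded-regime lower bound and the serving-capacity bound: if ⌊(M+2)/3⌋ < K (so coded pairwise transmissions serve at most 2(K−1) clients and uncoded ones serve M−K < 2(K−1) clients), any scheme using only uncoded and pairwise-coded transmissions requires at least ⌈MS / (2K−2)⌉ transmissions. -/
/-- CDPIC(S,K) with `M` messages and `M` clients, `3K > M + 2`, `K ≥ 2`:
uncoded transmissions serve at most `M - K < 2(K-1)` clients and
pairwise-coded ones at most `2K - 2`, so with each transmission `i` serving
`R i ≤ 2K - 2` clients and total demand `∑ R i ≥ M·S`, any scheme using only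
uncoded and pairwise-coded transmissions needs `N ≥ ⌈MS/(2K-2)⌉`
transmissions. -/
theorem coded_regime_lower_bound (M K S N : ℕ)
    (hK : 2 ≤ K) (hKM : K ≤ M) (h3 : M + 2 < 3 * K)
    (R : Fin N → ℕ) (hR : ∀ i, R i ≤ 2 * K - 2)
    (hsum : M * S ≤ ∑ i, R i) :
    M - K < 2 * (K - 1) ∧ (M * S + (2 * K - 2) - 1) / (2 * K - 2) ≤ N := by
  constructor
  · omega
  · have hb : 0 < 2 * K - 2 := by omega
    have hle : M * S ≤ N * (2 * K - 2) := by
      calc M * S ≤ ∑ i, R i := hsum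
        _ ≤ ∑ _i : Fin N, (2 * K - 2) := Finset.sum_le_sum fun i _ => hR i
        _ = N * (2 * K - 2) := by simp [Finset.sum_const, mul_comm]
    have h1 : M * S + (2 * K - 2) - 1 ≤ (2 * K - 2) * N + ((2 * K - 2) - 1) := by
      have hle' : M * S ≤ (2 * K - 2) * N := by rw [mul_comm (2 * K - 2) N]; exact hle
      omega
    calc (M * S + (2 * K - 2) - 1) / (2 * K - 2)
        ≤ ((2 * K - 2) * N + ((2 * K - 2) - 1)) / (2 * K - 2) := Nat.div_le_div_right h1
      _ = N + ((2 * K - 2) - 1) / (2 * K - 2) := Nat.mul_add_div hb _ _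
      _ = N := by rw [Nat.div_eq_of_lt (by omega)]; omega
end
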